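/- arXiv:2505.09897 — 3 statements merged into one kernel-verified Lean document; each statement's English description precedes it below -/
import Mathlib

section
/- Let B and C be commuting real symmetric n×n matrices with all eigenvalues of B and all eigenvalues of C strictly negative. Then every eigenvalue of the 2n×2n block matrix [[0, I], [B, C]] has strictly negative real part. -/
/-!
An eigenvector `(x, y)` of `[[0, I], [B, C]]` for `s` has `y = s x`, so `B x + s C x = s² x` with
`x ≠ 0`. Pairing with `x̄` gives `N s² + (-x* C x) s + (-x* B x) = 0`, where `N = x* x` and, since
`B` and `C` are negative definite, all three coefficients are positive reals. A real quadratic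
with positive coefficients has both roots in the open left half plane.
-/

open Matrix
open scoped ComplexOrder

namespace Complex

theorem re_neg_of_mul_sq_add_mul_add_eq_zero {a b c s : ℂ} (ha : 0 < a) (hb : 0 < b)
    (hc : 0 < c) (h : a * s ^ 2 + b * s + c = 0) : s.re < 0 := by
  rw [pos_iff] at ha hb hc
  have hre := congrArg re h
  have him := congrArg im h
  simp only [add_re, add_im, mul_re, mul_im, sq, ← ha.2, ← hb.2, ← hc.2, zero_re,
    zero_im] at hre him
  by_contra! hs
  rcases eq_or_ne s.im 0 with hreal | hreal
  · rw [hreal] at hre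
    nlinarith [mul_nonneg (mul_nonneg hs hs) ha.1.le, mul_nonneg hs hb.1.le]
  · have : 2 * a.re * s.re + b.re = 0 := mul_left_cancel₀ hreal (by linarith)
    nlinarith [mul_nonneg ha.1.le hs]

end Complex

namespace Matrix

variable {m : Type*} [Fintype m] [DecidableEq m]

theorem IsHermitian.posDef_of_forall_mem_spectrum_pos {𝕜 : Type*} [RCLike 𝕜]
    {A : Matrix m m 𝕜} (hA : A.IsHermitian) (h : ∀ a ∈ spectrum ℝ A, 0 < a) : A.PosDef :=
  hA.posDef_iff_eigenvalues_pos.mpr fun i => h _ (hA.eigenvalues_mem_spectrum_real i)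

theorem IsSymm.dotProduct_map_ofReal_mulVec_neg {A : Matrix m m ℝ} (hA : A.IsSymm)
    (h : ∀ a ∈ spectrum ℝ A, a < 0) {x : m → ℂ} (hx : x ≠ 0) :
    star x ⬝ᵥ (A.map Complex.ofReal *ᵥ x) < 0 := by
  have hherm : (-A.map Complex.ofReal).IsHermitian :=
    ((isHermitian_iff_isSymm.mpr hA).map _ fun _ => (Complex.conj_ofReal _).symm).neg
  have hspec : ∀ a ∈ spectrum ℝ (-A.map Complex.ofReal), 0 < a := by
    intro a ha
    rw [← spectrum.neg_eq, Set.mem_neg] at ha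
    have : -a ∈ spectrum ℝ A :=
      AlgHom.spectrum_apply_subset (RCLike.ofRealAm (K := ℂ)).mapMatrix A ha
    linarith [h _ this]
  simpa [neg_mulVec] using
    (hherm.posDef_of_forall_mem_spectrum_pos hspec).dotProduct_mulVec_pos hx

theorem exists_mulVec_add_smul_mulVec_eq_of_mem_spectrum_fromBlocks {K : Type*} [Field K]
    {B C : Matrix m m K} {s : K}
    (hs : s ∈ spectrum K (fromBlocks 0 1 B C : Matrix (m ⊕ m) (m ⊕ m) K)) :
    ∃ x ≠ 0, B *ᵥ x + s • (C *ᵥ x) = s ^ 2 • x := by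
  rw [← spectrum_toLin', ← Module.End.hasEigenvalue_iff_mem_spectrum] at hs
  obtain ⟨v, hv⟩ := hs.exists_hasEigenvector
  obtain ⟨x, y, rfl⟩ : ∃ x y, v = Sum.elim x y := ⟨_, _, (Sum.elim_comp_inl_inr v).symm⟩
  have hMv : fromBlocks 0 1 B C *ᵥ Sum.elim x y = s • Sum.elim x y := by
    simpa using hv.apply_eq_smul
  rw [fromBlocks_mulVec] at hMv
  have hupper : y = s • x := funext fun i => by simpa using congrFun hMv (Sum.inl i)
  have hlower : B *ᵥ x + C *ᵥ y = s • y := funext fun i => by simpa using congrFun hMv (Sum.inr i)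
  subst hupper
  refine ⟨x, fun hx => hv.2 ?_, ?_⟩
  · simp [hx]
  · rw [← mulVec_smul, hlower, smul_smul, sq]

end Matrix

theorem block_stable_of_negative_spectra_general (n : ℕ)
    (B C : Matrix (Fin n) (Fin n) ℝ) (hB : B.IsSymm) (hC : C.IsSymm)
    (hBneg : ∀ b ∈ spectrum ℝ B, b < 0)
    (hCneg : ∀ c ∈ spectrum ℝ C, c < 0) :
    ∀ s ∈ spectrum ℂ (((fromBlocks 0 1 B C : Matrix (Fin n ⊕ Fin n) (Fin n ⊕ Fin n) ℝ)).map (Complex.ofReal)), s.re < 0 := by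
  intro s hs
  rw [fromBlocks_map, Matrix.map_zero _ Complex.ofReal_zero,
    Matrix.map_one _ Complex.ofReal_zero Complex.ofReal_one] at hs
  obtain ⟨x, hx, hquad⟩ := exists_mulVec_add_smul_mulVec_eq_of_mem_spectrum_fromBlocks hs
  have hform := congrArg (star x ⬝ᵥ ·) hquad
  simp only [dotProduct_add, dotProduct_smul, smul_eq_mul] at hform
  refine Complex.re_neg_of_mul_sq_add_mul_add_eq_zero (dotProduct_star_self_pos_iff.mpr hx)
    (neg_pos.mpr (hC.dotProduct_map_ofReal_mulVec_neg hCneg hx))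
    (neg_pos.mpr (hB.dotProduct_map_ofReal_mulVec_neg hBneg hx)) ?_
  linear_combination -hform

/-- Stability direction of Lemma 5: if `B` and `C` are commuting real
symmetric matrices with all eigenvalues strictly negative, then every
eigenvalue of `[[0, I], [B, C]]` has strictly negative real part. -/
theorem block_stable_of_negative_spectra (n : ℕ)
    (B C : Matrix (Fin n) (Fin n) ℝ) (hB : B.IsSymm) (hC : C.IsSymm)
    (hBC : B * C = C * B)
    (hBneg : ∀ b ∈ spectrum ℝ B, b < 0)
    (hCneg : ∀ c ∈ spectrum ℝ C, c < 0) :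
    ∀ s ∈ spectrum ℂ (((fromBlocks 0 1 B C : Matrix (Fin n ⊕ Fin n) (Fin n ⊕ Fin n) ℝ)).map (Complex.ofReal)), s.re < 0 :=
  block_stable_of_negative_spectra_general n B C hB hC hBneg hCneg
end

section
/- Conversely, if B and C are commuting real symmetric n×n matrices and every eigenvalue of the block matrix [[0, I], [B, C]] has strictly negative real part, then all eigenvalues of B and of C are strictly negative. -/
/-!
Since `B` and `C` commute they have a common complex eigenvector `v`, say `B v = b v` and
`C v = μ v`. For each root `s` of `s² = μ s + b`, the vector `(v, s v)` is an eigenvector of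
`[[0, I], [B, C]]` with eigenvalue `s`, so both roots `s₁, s₂` have negative real part, and
`s₁ + s₂ = μ`, `s₁ s₂ = -b`. If `b` is real, `s₁ s₂ > 0` forces `b < 0`; if `μ = c` is real,
`c = Re s₁ + Re s₂ < 0`.
-/

open Matrix

theorem Matrix.map_mem_spectrum_map {K L n : Type*} [Field K] [Field L] [Fintype n] [DecidableEq n]
    (f : K →+* L) {A : Matrix n n K} {a : K} (ha : a ∈ spectrum K A) :
    f a ∈ spectrum L (A.map f) := by
  rw [mem_spectrum_iff_isRoot_charpoly] at ha ⊢
  rw [charpoly_map]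
  exact ha.map

theorem Matrix.mem_spectrum_of_mulVec_eq_smul {R n : Type*} [CommRing R] [Fintype n]
    [DecidableEq n] {A : Matrix n n R} {s : R} {v : n → R} (hv : v ≠ 0) (hAv : A *ᵥ v = s • v) :
    s ∈ spectrum R A := by
  rw [← spectrum_toLin']
  exact Module.End.HasEigenvalue.mem_spectrum <| Module.End.hasEigenvalue_of_hasEigenvector
    ⟨Module.End.mem_eigenspace_iff.mpr hAv, hv⟩

theorem Module.End.HasEigenvalue.exists_hasEigenvector_of_commute {K V : Type*} [Field K]
    [IsAlgClosed K] [AddCommGroup V] [Module K V] [FiniteDimensional K V] {f g : End K V}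
    (hfg : Commute f g) {μ : K} (hμ : f.HasEigenvalue μ) :
    ∃ v ν, f.HasEigenvector μ v ∧ g.HasEigenvector ν v := by
  have hg : ∀ x ∈ f.eigenspace μ, g x ∈ f.eigenspace μ := mapsTo_genEigenspace_of_comm hfg μ 1
  have : Nontrivial (f.eigenspace μ) := Submodule.nontrivial_iff_ne_bot.mpr hμ
  obtain ⟨ν, hν⟩ := exists_eigenvalue (g.restrict hg)
  obtain ⟨w, hw, hw0⟩ := hν.exists_hasEigenvector
  exact ⟨w, ν, ⟨w.2, by simpa using hw0⟩,
    ⟨eigenspace_restrict_le_eigenspace g hg ν ⟨w, hw, rfl⟩, by simpa using hw0⟩⟩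

theorem Matrix.exists_common_eigenvector_of_commute {K n : Type*} [Field K] [IsAlgClosed K]
    [Fintype n] [DecidableEq n] {M N : Matrix n n K} (hMN : Commute M N) {μ : K}
    (hμ : μ ∈ spectrum K M) :
    ∃ (v : n → K) (ν : K), v ≠ 0 ∧ M *ᵥ v = μ • v ∧ N *ᵥ v = ν • v := by
  rw [← spectrum_toLin', ← Module.End.hasEigenvalue_iff_mem_spectrum] at hμ
  obtain ⟨v, ν, hMv, hNv⟩ :=
    hμ.exists_hasEigenvector_of_commute (hMN.map (toLinAlgEquiv' (R := K) (n := n)))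
  exact ⟨v, ν, hMv.2, Module.End.mem_eigenspace_iff.mp hMv.1,
    Module.End.mem_eigenspace_iff.mp hNv.1⟩

theorem IsAlgClosed.exists_add_eq_and_mul_eq_neg {K : Type*} [Field K] [IsAlgClosed K] (μ b : K) :
    ∃ s₁ s₂, s₁ + s₂ = μ ∧ s₁ * s₂ = -b := by
  open Polynomial in
  obtain ⟨s, hs⟩ := IsAlgClosed.exists_root (C 1 * X ^ 2 + C (-μ) * X + C (-b))
    (by rw [degree_quadratic one_ne_zero]; decide)
  refine ⟨s, μ - s, by ring, ?_⟩
  simp only [IsRoot, eval_add, eval_mul, eval_C, eval_pow, eval_X] at hs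
  linear_combination -hs

theorem Matrix.fromBlocks_companion_mulVec {R n : Type*} [CommRing R] [Fintype n] [DecidableEq n]
    {B C : Matrix n n R} {b μ s : R} {v : n → R} (hBv : B *ᵥ v = b • v) (hCv : C *ᵥ v = μ • v)
    (hs : s * s = μ * s + b) :
    fromBlocks (0 : Matrix n n R) 1 B C *ᵥ Sum.elim v (s • v) = s • Sum.elim v (s • v) := by
  rw [fromBlocks_mulVec]
  ext (i | i)
  · simp
  · simp only [Sum.elim_comp_inl, Sum.elim_comp_inr, hBv, mulVec_smul, hCv, Sum.elim_inr,
      Pi.add_apply, Pi.smul_apply, smul_eq_mul]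
    linear_combination (-v i) * hs

theorem Matrix.exists_mem_spectrum_fromBlocks_companion {K n : Type*} [Field K] [IsAlgClosed K]
    [Fintype n] [DecidableEq n] {B C : Matrix n n K} {b μ : K} {v : n → K} (hv : v ≠ 0)
    (hBv : B *ᵥ v = b • v) (hCv : C *ᵥ v = μ • v) :
    ∃ s₁ ∈ spectrum K (fromBlocks (0 : Matrix n n K) 1 B C),
      ∃ s₂ ∈ spectrum K (fromBlocks (0 : Matrix n n K) 1 B C), s₁ + s₂ = μ ∧ s₁ * s₂ = -b := by
  have hspec (s : K) (hs : s * s = μ * s + b) :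
      s ∈ spectrum K (fromBlocks (0 : Matrix n n K) 1 B C) :=
    mem_spectrum_of_mulVec_eq_smul (fun h ↦ hv (by simpa using congrArg (· ∘ Sum.inl) h))
      (fromBlocks_companion_mulVec hBv hCv hs)
  obtain ⟨s₁, s₂, hsum, hprod⟩ := IsAlgClosed.exists_add_eq_and_mul_eq_neg μ b
  exact ⟨s₁, hspec s₁ (by linear_combination s₁ * hsum - hprod), s₂,
    hspec s₂ (by linear_combination s₂ * hsum - hprod), hsum, hprod⟩

theorem Complex.re_mul_pos_of_re_neg_of_im_mul_eq_zero {z w : ℂ} (hz : z.re < 0) (hw : w.re < 0)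
    (him : (z * w).im = 0) : 0 < (z * w).re := by
  -- real part of `conj z * (z * w) = normSq z * w`
  have key : (z * w).re * z.re = normSq z * w.re := by
    simp only [mul_re, mul_im, normSq_apply] at him ⊢
    linear_combination (-z.im) * him
  have hz0 : 0 < normSq z := normSq_pos.mpr fun h ↦ by simp [h] at hz
  nlinarith [mul_neg_of_pos_of_neg hz0 hw]

theorem negative_spectra_of_block_stable_general (n : ℕ)
    (B C : Matrix (Fin n) (Fin n) ℝ)
    (hBC : B * C = C * B)
    (hstab : ∀ s ∈ spectrum ℂ (((fromBlocks 0 1 B C : Matrix (Fin n ⊕ Fin n) (Fin n ⊕ Fin n) ℝ)).map (Complex.ofReal)), s.re < 0) :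
    (∀ b ∈ spectrum ℝ B, b < 0) ∧ (∀ c ∈ spectrum ℝ C, c < 0) := by
  have hcomm : Commute (B.map Complex.ofReal) (C.map Complex.ofReal) :=
    (show Commute B C from hBC).map Complex.ofRealHom.mapMatrix
  simp only [fromBlocks_map, Matrix.map_zero _ Complex.ofReal_zero,
    Matrix.map_one _ Complex.ofReal_zero Complex.ofReal_one] at hstab
  constructor
  · intro b hb
    obtain ⟨v, μ, hv, hBv, hCv⟩ :=
      exists_common_eigenvector_of_commute hcomm (map_mem_spectrum_map Complex.ofRealHom hb)
    obtain ⟨s₁, h₁, s₂, h₂, -, hprod⟩ := exists_mem_spectrum_fromBlocks_companion hv hBv hCv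
    have hpos := Complex.re_mul_pos_of_re_neg_of_im_mul_eq_zero (hstab s₁ h₁) (hstab s₂ h₂)
      (by simp [hprod])
    simpa [hprod] using hpos
  · intro c hc
    obtain ⟨v, β, hv, hCv, hBv⟩ :=
      exists_common_eigenvector_of_commute hcomm.symm (map_mem_spectrum_map Complex.ofRealHom hc)
    obtain ⟨s₁, h₁, s₂, h₂, hsum, -⟩ := exists_mem_spectrum_fromBlocks_companion hv hBv hCv
    have hre : s₁.re + s₂.re = c := by simpa using congrArg Complex.re hsum
    linarith [hstab s₁ h₁, hstab s₂ h₂]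

/-- Necessity direction of Lemma 5: if every eigenvalue of
`[[0, I], [B, C]]` has strictly negative real part (with `B`, `C`
commuting real symmetric matrices), then all eigenvalues of `B` and
of `C` are strictly negative. -/
theorem negative_spectra_of_block_stable (n : ℕ)
    (B C : Matrix (Fin n) (Fin n) ℝ) (hB : B.IsSymm) (hC : C.IsSymm)
    (hBC : B * C = C * B)
    (hstab : ∀ s ∈ spectrum ℂ (((fromBlocks 0 1 B C : Matrix (Fin n ⊕ Fin n) (Fin n ⊕ Fin n) ℝ)).map (Complex.ofReal)), s.re < 0) :
    (∀ b ∈ spectrum ℝ B, b < 0) ∧ (∀ c ∈ spectrum ℝ C, c < 0) :=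
  negative_spectra_of_block_stable_general n B C hBC hstab
end

section
/- Suppose W = [[0,0],[W₂₁,W₂₂]] is a 2n×2n matrix and Z = [[Z₁, Z₃],[Z₂, Z₄]] is invertible with W·Z = Z·diag(0ₙ, Λ) where Λ is an invertible diagonal n×n matrix. Then Z₃ = 0, Z₁ and Z₄ are invertible, W₂₂ = Z₄ Λ Z₄⁻¹, and W₂₁ = -W₂₂ Z₂ Z₁⁻¹. -/
open Matrix

/-- Lemma 4: if `W = [[0,0],[W₂₁,W₂₂]]`, `Z = [[Z₁,Z₃],[Z₂,Z₄]]` is invertible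
and `W·Z = Z·diag(0ₙ, Λ)` with `Λ` an invertible diagonal matrix, then
`Z₃ = 0`, `Z₁` and `Z₄` are invertible, `W₂₂ = Z₄ Λ Z₄⁻¹` and
`W₂₁ = -W₂₂ Z₂ Z₁⁻¹`. -/
theorem lambertW_matrix_structure (n : ℕ)
    (W21 W22 Z1 Z2 Z3 Z4 : Matrix (Fin n) (Fin n) ℂ) (l : Fin n → ℂ)
    (hl : ∀ i, l i ≠ 0)
    (hZ : IsUnit (fromBlocks Z1 Z3 Z2 Z4 : Matrix (Fin n ⊕ Fin n) (Fin n ⊕ Fin n) ℂ))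
    (hWZ : (fromBlocks 0 0 W21 W22 : Matrix (Fin n ⊕ Fin n) (Fin n ⊕ Fin n) ℂ) *
        fromBlocks Z1 Z3 Z2 Z4 =
      fromBlocks Z1 Z3 Z2 Z4 * fromBlocks 0 0 0 (diagonal l)) :
    Z3 = 0 ∧ IsUnit Z1 ∧ IsUnit Z4 ∧
      W22 = Z4 * diagonal l * Z4⁻¹ ∧
      W21 = -(W22 * Z2 * Z1⁻¹) := by
  have hL : IsUnit (diagonal l) := by
    rw [Matrix.isUnit_iff_isUnit_det, det_diagonal]
    exact isUnit_iff_ne_zero.mpr (Finset.prod_ne_zero_iff.mpr fun i _ => hl i)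
  rw [fromBlocks_multiply, fromBlocks_multiply] at hWZ
  simp only [Matrix.zero_mul, Matrix.mul_zero, add_zero, zero_add] at hWZ
  have h12 : (0 : Matrix (Fin n) (Fin n) ℂ) = Z3 * diagonal l :=
    congrArg (fun M => toBlocks₁₂ M) hWZ
  have h21 : W21 * Z1 + W22 * Z2 = 0 :=
    congrArg (fun M => toBlocks₂₁ M) hWZ
  have h22 : W21 * Z3 + W22 * Z4 = Z4 * diagonal l :=
    congrArg (fun M => toBlocks₂₂ M) hWZ
  have hZ3 : Z3 = 0 := by
    have := congrArg (fun M => M * (diagonal l)⁻¹) h12.symm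
    simpa [Matrix.mul_assoc, Matrix.mul_nonsing_inv _
      (Matrix.isUnit_iff_isUnit_det _ |>.mp hL)] using this
  subst hZ3
  have hdet : IsUnit (Z1.det * Z4.det) := by
    have := (Matrix.isUnit_iff_isUnit_det _).mp hZ
    rwa [det_fromBlocks_zero₁₂] at this
  have hZ1 : IsUnit Z1 := (Matrix.isUnit_iff_isUnit_det _).mpr (isUnit_of_mul_isUnit_left hdet)
  have hZ4 : IsUnit Z4 := (Matrix.isUnit_iff_isUnit_det _).mpr
    (isUnit_of_mul_isUnit_left (mul_comm Z1.det Z4.det ▸ hdet))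
  have hZ1d := (Matrix.isUnit_iff_isUnit_det _).mp hZ1
  have hZ4d := (Matrix.isUnit_iff_isUnit_det _).mp hZ4
  have hW22 : W22 = Z4 * diagonal l * Z4⁻¹ := by
    have h : W22 * Z4 = Z4 * diagonal l := by simpa using h22
    calc W22 = W22 * Z4 * Z4⁻¹ := by
          rw [Matrix.mul_assoc, Matrix.mul_nonsing_inv _ hZ4d, Matrix.mul_one]
      _ = Z4 * diagonal l * Z4⁻¹ := by rw [h]
  refine ⟨rfl, hZ1, hZ4, hW22, ?_⟩
  have h : W21 * Z1 = -(W22 * Z2) := by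
    rw [eq_neg_iff_add_eq_zero]; exact h21
  calc W21 = W21 * Z1 * Z1⁻¹ := by
        rw [Matrix.mul_assoc, Matrix.mul_nonsing_inv _ hZ1d, Matrix.mul_one]
    _ = -(W22 * Z2 * Z1⁻¹) := by rw [h, Matrix.neg_mul]
end
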